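/- On A = {a,b,c} with k = 2, let f(1,1) = 1, f(2,2) = 2, and f(x,y) = 0 otherwise, and let sc(W,S) = f(|W∩S|,|S|). Let U = {a,b}, V = {a,c}, and let P be a probability distribution over subsets of A that is d-monotonic with ground truth U for some majority-concentric distance metric d. Then E_{S∼P}[sc(U,S) − sc(V,S)] = 2P[{a,b}] − 2P[{a,c}] + P[{b}] − P[{c}] > 0. -/

import Mathlib

/-- The scoring function: `f 1 1 = 1`, `f 2 2 = 2`, `0` otherwise. -/
def fEx : ℕ → ℕ → ℝ
  | 1, 1 => 1
  | 2, 2 => 2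
  | _, _ => 0

/-- `d` is a distance metric on subsets. -/
def IsMetric {α : Type*} (d : Finset α → Finset α → ℝ) : Prop :=
  (∀ X Y, 0 ≤ d X Y) ∧ (∀ X Y, d X Y = 0 ↔ X = Y) ∧
  (∀ X Y, d X Y = d Y X) ∧ (∀ X Y Z, d X Z ≤ d X Y + d Y Z)

/-- `d` is majority-concentric. -/
def IsMajorityConcentric {α : Type*} [Fintype α] [DecidableEq α]
    (d : Finset α → Finset α → ℝ) : Prop :=
  ∀ (U : Finset α) (a b : α), a ∈ U → b ∉ U → ∀ t : ℝ, 0 ≤ t →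
    {S : Finset α | b ∈ S ∧ a ∉ S ∧ d U S ≤ t}.ncard ≤
      {S : Finset α | a ∈ S ∧ b ∉ S ∧ d U S ≤ t}.ncard

/-- `P` is a probability distribution over subsets. -/
def IsProbDist {α : Type*} [Fintype α] [DecidableEq α] (P : Finset α → ℝ) : Prop :=
  (∀ S, 0 ≤ P S) ∧ (∑ S : Finset α, P S = 1)

/-- `P` is `d`-monotonic with ground truth `U`. -/
def IsMonotonicNoise {α : Type*} (d : Finset α → Finset α → ℝ) (U : Finset α)
    (P : Finset α → ℝ) : Prop :=
  ∀ S₁ S₂ : Finset α, P S₂ < P S₁ ↔ d U S₁ < d U S₂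

/-!
Since the ground truth `{0, 1}` is the unique closest set, it is strictly the most likely one,
so `2 P {0, 1} - 2 P {0, 2} > 0`. The only remaining term that can be negative is
`P {1} - P {2}`. Majority-concentricity, applied to `1 ∈ {0, 1}` and `2 ∉ {0, 1}` at the radius
reaching both `{2}` and `{0, 2}`, puts `{1}` within that radius too, so
`P {1} ≥ min (P {2}) (P {0, 2})`; either case makes the expectation positive.
-/

section

variable {α : Type*}

theorem IsMonotonicNoise.le_of_dist_le {d : Finset α → Finset α → ℝ} {U : Finset α}
    {P : Finset α → ℝ} (hmono : IsMonotonicNoise d U P) {S₁ S₂ : Finset α}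
    (h : d U S₁ ≤ d U S₂) : P S₂ ≤ P S₁ :=
  not_lt.mp <| (hmono S₂ S₁).not.mpr (not_lt.mpr h)

theorem IsMonotonicNoise.lt_of_ne {d : Finset α → Finset α → ℝ} {U : Finset α}
    {P : Finset α → ℝ} (hmetric : IsMetric d) (hmono : IsMonotonicNoise d U P) {S : Finset α}
    (hS : S ≠ U) : P S < P U := by
  have hUU : d U U = 0 := (hmetric.2.1 U U).mpr rfl
  have hUS : 0 < d U S :=
    lt_of_le_of_ne (hmetric.1 U S) fun h => hS ((hmetric.2.1 U S).mp h.symm).symm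
  exact (hmono U S).mpr (hUU ▸ hUS)

/-- Exchanging `a` and `b` shows that there are equally many sets of either kind, so the
majority-concentric inequality leaves no room for an `a`-set outside the radius. -/
theorem IsMajorityConcentric.dist_le_of_forall_dist_le [Fintype α] [DecidableEq α]
    {d : Finset α → Finset α → ℝ} (hmc : IsMajorityConcentric d) {U : Finset α} {a b : α}
    (ha : a ∈ U) (hb : b ∉ U) {t : ℝ} (ht : 0 ≤ t)
    (h : ∀ S, b ∈ S → a ∉ S → d U S ≤ t) {S : Finset α} (haS : a ∈ S) (hbS : b ∉ S) :
    d U S ≤ t := by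
  set near : Set (Finset α) := {S | a ∈ S ∧ b ∉ S ∧ d U S ≤ t}
  set all : Set (Finset α) := {S | a ∈ S ∧ b ∉ S}
  have hswap : all.ncard ≤ {S : Finset α | b ∈ S ∧ a ∉ S ∧ d U S ≤ t}.ncard := by
    refine Set.ncard_le_ncard_of_injOn (Finset.map (Equiv.swap a b).toEmbedding) ?_
      (Finset.map_injective _).injOn
    rintro T ⟨haT, hbT⟩
    have hbT' : b ∈ T.map (Equiv.swap a b).toEmbedding := by simpa [Finset.mem_map_equiv]
    have haT' : a ∉ T.map (Equiv.swap a b).toEmbedding := by simpa [Finset.mem_map_equiv]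
    exact ⟨hbT', haT', h _ hbT' haT'⟩
  have hnear : near = all :=
    Set.eq_of_subset_of_ncard_le (fun T hT => ⟨hT.1, hT.2.1⟩) (hswap.trans (hmc U a b ha hb t ht))
  have hS : S ∈ near := hnear ▸ ⟨haS, hbS⟩
  exact hS.2.2

end

theorem expectedScoreDiff_eq (P : Finset (Fin 3) → ℝ) :
    ∑ S : Finset (Fin 3),
        (fEx (({0, 1} : Finset (Fin 3)) ∩ S).card S.card -
          fEx (({0, 2} : Finset (Fin 3)) ∩ S).card S.card) * P S =
      2 * P {0, 1} - 2 * P {0, 2} + P {1} - P {2} := by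
  rw [show (Finset.univ : Finset (Finset (Fin 3))) =
      {∅, {0}, {1}, {2}, {0, 1}, {0, 2}, {1, 2}, {0, 1, 2}} by decide]
  simp +decide [fEx]
  ring

theorem dist_singleton_one_le {d : Finset (Fin 3) → Finset (Fin 3) → ℝ} (hmetric : IsMetric d)
    (hmc : IsMajorityConcentric d) :
    d {0, 1} {1} ≤ max (d {0, 1} {2}) (d {0, 1} {0, 2}) := by
  have hsets : ∀ S : Finset (Fin 3), 2 ∈ S → 1 ∉ S → S = {2} ∨ S = {0, 2} := by decide
  refine hmc.dist_le_of_forall_dist_le (a := 1) (b := 2) (by decide) (by decide)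
    ((hmetric.1 _ _).trans (le_max_left _ _)) ?_ (by decide) (by decide)
  intro S h2 h1
  rcases hsets S h2 h1 with rfl | rfl
  · exact le_max_left _ _
  · exact le_max_right _ _

theorem stmt17_general (d : Finset (Fin 3) → Finset (Fin 3) → ℝ)
    (hmetric : IsMetric d) (hmc : IsMajorityConcentric d)
    (P : Finset (Fin 3) → ℝ)
    (hmono : IsMonotonicNoise d ({0, 1} : Finset (Fin 3)) P) :
    (∑ S : Finset (Fin 3),
        (fEx (({0, 1} : Finset (Fin 3)) ∩ S).card S.card -
          fEx (({0, 2} : Finset (Fin 3)) ∩ S).card S.card) * P S =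
      2 * P {0, 1} - 2 * P {0, 2} + P {1} - P {2}) ∧
    0 < ∑ S : Finset (Fin 3),
        (fEx (({0, 1} : Finset (Fin 3)) ∩ S).card S.card -
          fEx (({0, 2} : Finset (Fin 3)) ∩ S).card S.card) * P S := by
  rw [expectedScoreDiff_eq]
  refine ⟨rfl, ?_⟩
  have h02 : P {0, 2} < P {0, 1} := hmono.lt_of_ne hmetric (by decide)
  have h2 : P {2} < P {0, 1} := hmono.lt_of_ne hmetric (by decide)
  rcases le_max_iff.mp (dist_singleton_one_le hmetric hmc) with h | h
  · have := hmono.le_of_dist_le h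
    linarith
  · have := hmono.le_of_dist_le h
    linarith

theorem stmt17 (d : Finset (Fin 3) → Finset (Fin 3) → ℝ)
    (hmetric : IsMetric d) (hmc : IsMajorityConcentric d)
    (P : Finset (Fin 3) → ℝ) (hP : IsProbDist P)
    (hmono : IsMonotonicNoise d ({0, 1} : Finset (Fin 3)) P) :
    (∑ S : Finset (Fin 3),
        (fEx (({0, 1} : Finset (Fin 3)) ∩ S).card S.card -
          fEx (({0, 2} : Finset (Fin 3)) ∩ S).card S.card) * P S =
      2 * P {0, 1} - 2 * P {0, 2} + P {1} - P {2}) ∧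
    0 < ∑ S : Finset (Fin 3),
        (fEx (({0, 1} : Finset (Fin 3)) ∩ S).card S.card -
          fEx (({0, 2} : Finset (Fin 3)) ∩ S).card S.card) * P S :=
  stmt17_general d hmetric hmc P hmono
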